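/- arXiv:1409.6687 — 6 statements merged into one kernel-verified Lean document; each statement's English description precedes it below -/
import Mathlib

section
/- Let G be a finite set of monomials and let L₁, L₂ ⊆ G with lcm(L₁) = lcm(L₂). Then L₁ and L₂ contain exactly the same dominant monomials of G; that is, for every m ∈ G that is dominant with respect to G, m ∈ L₁ if and only if m ∈ L₂. -/
open Finset

variable {X : Type*} [DecidableEq X]

/-- The lcm of a finite set of monomials (monomials = finitely supported
exponent functions): pointwise maximum of exponents. -/
noncomputable def mlcm (L : Finset (X →₀ ℕ)) : X →₀ ℕ := L.sup id

/-- `m` is dominant with respect to `G`: some variable `x` appears in `m`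
with exponent at least `k > 0` while every other element of `G` has
`x`-exponent `< k`. -/
def Dominant (G : Finset (X →₀ ℕ)) (m : X →₀ ℕ) : Prop :=
  ∃ x : X, ∃ k : ℕ, 0 < k ∧ k ≤ m x ∧ ∀ m' ∈ G, m' ≠ m → m' x < k

/-- Total degree of a monomial: sum of its exponents. -/
def mdeg (m : X →₀ ℕ) : ℕ := m.sum fun _ e => e

/-
A dominant monomial `m` of `G`, witnessed by the variable `x` and the bound `k`, is the only
element of `G` whose `x`-exponent reaches `k`. Hence a subset `L ⊆ G` contains `m` exactly when
the `x`-exponent of `mlcm L` reaches `k`, and this is determined by `mlcm L`.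
-/

section

variable {σ : Type*}

lemma mlcm_apply (L : Finset (σ →₀ ℕ)) (x : σ) : mlcm L x = L.sup (fun m => m x) := by
  induction L using Finset.cons_induction with
  | empty => rfl
  | cons a s _ ih => simp only [mlcm, sup_cons, id, Finsupp.sup_apply] at ih ⊢; rw [ih]

lemma le_mlcm_apply_iff {L : Finset (σ →₀ ℕ)} {x : σ} {k : ℕ} (hk : 0 < k) :
    k ≤ mlcm L x ↔ ∃ m ∈ L, k ≤ m x := by
  rw [mlcm_apply]
  exact Finset.le_sup_iff hk

lemma mem_iff_le_mlcm_apply {G L : Finset (σ →₀ ℕ)} (hL : L ⊆ G) {m : σ →₀ ℕ} {x : σ} {k : ℕ}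
    (hk : 0 < k) (hkm : k ≤ m x) (hdom : ∀ m' ∈ G, m' ≠ m → m' x < k) :
    m ∈ L ↔ k ≤ mlcm L x := by
  rw [le_mlcm_apply_iff hk]
  refine ⟨fun hm => ⟨m, hm, hkm⟩, fun ⟨m', hm', hkm'⟩ => ?_⟩
  by_contra hm
  exact (hdom m' (hL hm') (ne_of_mem_of_not_mem hm' hm)).not_ge hkm'

end

theorem same_lcm_same_dominant (G L₁ L₂ : Finset (X →₀ ℕ)) (h1 : L₁ ⊆ G) (h2 : L₂ ⊆ G)
    (hlcm : mlcm L₁ = mlcm L₂) :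
    ∀ m ∈ G, Dominant G m → (m ∈ L₁ ↔ m ∈ L₂) := by
  rintro m - ⟨x, k, hk, hkm, hdom⟩
  rw [mem_iff_le_mlcm_apply h1 hk hkm hdom, mem_iff_le_mlcm_apply h2 hk hkm hdom, hlcm]
end

section
/- Let G be a finite dominant set of monomials (every element of G is dominant with respect to G). If L₁, L₂ ⊆ G satisfy lcm(L₁) = lcm(L₂), then L₁ = L₂. In other words, the map sending a subset of G to its lcm is injective on subsets of a dominant set. -/
open Finset

variable {X : Type*} [DecidableEq X]

lemma le_mlcm {σ : Type*} {L : Finset (σ →₀ ℕ)} {m : σ →₀ ℕ} (hm : m ∈ L) :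
    m ≤ mlcm L :=
  le_sup (f := id) hm

lemma mlcm_apply_lt {σ : Type*} {L : Finset (σ →₀ ℕ)} {x : σ} {k : ℕ} (hk : 0 < k)
    (h : ∀ m ∈ L, m x < k) : mlcm L x < k :=
  sup_induction (p := fun f : σ →₀ ℕ => f x < k) hk (fun _ ha _ hb => max_lt ha hb) h

/-- The variable witnessing dominance of `m` has exponent below the threshold in every other
element of `G`, so only `m` itself can push the lcm of a subset of `G` up to it. -/
lemma Dominant.mem_of_le_mlcm {σ : Type*} {G L : Finset (σ →₀ ℕ)} {m : σ →₀ ℕ}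
    (hm : Dominant G m) (hL : L ⊆ G) (hle : m ≤ mlcm L) : m ∈ L := by
  obtain ⟨x, k, hk, hkm, hlt⟩ := hm
  by_contra hmL
  have hlcm : mlcm L x < k :=
    mlcm_apply_lt hk fun m' hm' => hlt m' (hL hm') (ne_of_mem_of_not_mem hm' hmL)
  exact (hkm.trans (hle x)).not_gt hlcm

lemma subset_of_mlcm_le {σ : Type*} {G L₁ L₂ : Finset (σ →₀ ℕ)}
    (hdom : ∀ m ∈ L₁, Dominant G m) (hL₂ : L₂ ⊆ G) (hle : mlcm L₁ ≤ mlcm L₂) : L₁ ⊆ L₂ :=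
  fun _ hm => (hdom _ hm).mem_of_le_mlcm hL₂ ((le_mlcm hm).trans hle)

theorem lcm_injective_of_dominant (G : Finset (X →₀ ℕ)) (hdom : ∀ m ∈ G, Dominant G m)
    (L₁ L₂ : Finset (X →₀ ℕ)) (h1 : L₁ ⊆ G) (h2 : L₂ ⊆ G)
    (hlcm : mlcm L₁ = mlcm L₂) : L₁ = L₂ :=
  Subset.antisymm (subset_of_mlcm_le (fun m hm => hdom m (h1 hm)) h2 hlcm.le)
    (subset_of_mlcm_le (fun m hm => hdom m (h2 hm)) h1 hlcm.ge)
end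

section
/- Let G be a finite dominant set of monomials with q = |G| elements, and let h be the total degree of lcm(G). Then for every subset L ⊆ G with |L| = i and total degree of lcm(L) equal to j, one has h − q ≥ j − i. -/
open Finset

variable {X : Type*} [DecidableEq X]

/-! Adding a dominant element `m` of `G` to a subset `S ⊆ G` not containing it strictly raises
the lcm in the variable where `m` dominates, so the total degree of the lcm grows by at least one
per added element. Hence `deg (lcm S) - |S|` is monotone on subsets of `G`. -/

section

variable {σ : Type*}

lemma mdeg_strictMono : StrictMono (mdeg : (σ →₀ ℕ) → ℕ) := by
  intro f g hfg
  obtain ⟨d, rfl⟩ := le_iff_exists_add.mp hfg.le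
  have hd : d.degree ≠ 0 := (Finsupp.degree_eq_zero_iff d).not.mpr <| by
    rintro rfl
    simp at hfg
  change f.degree < (f + d).degree
  rw [map_add]
  omega

lemma mlcm_apply_s4 (S : Finset (σ →₀ ℕ)) (x : σ) : mlcm S x = S.sup (· x) :=
  Finset.apply_sup_eq_sup_comp (g := fun m : σ →₀ ℕ => m x) (fun _ _ => Finsupp.sup_apply ..) rfl

lemma mlcm_lt_mlcm_insert [DecidableEq σ] {S : Finset (σ →₀ ℕ)} {m : σ →₀ ℕ} {x : σ}
    (h : mlcm S x < m x) : mlcm S < mlcm (insert m S) := by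
  rw [mlcm, mlcm, sup_insert]
  exact right_lt_sup.mpr fun hle => (hle x).not_gt h

lemma Dominant.exists_mlcm_apply_lt {G S : Finset (σ →₀ ℕ)} {m : σ →₀ ℕ} (hm : Dominant G m)
    (hSG : S ⊆ G) (hmS : m ∉ S) : ∃ x, mlcm S x < m x := by
  obtain ⟨x, k, hk, hkm, hlt⟩ := hm
  refine ⟨x, lt_of_lt_of_le ?_ hkm⟩
  rw [mlcm_apply_s4, Finset.sup_lt_iff hk]
  exact fun s hs => hlt s (hSG hs) (ne_of_mem_of_not_mem hs hmS)

lemma Dominant.mdeg_mlcm_sub_card_le_insert [DecidableEq σ] {G S : Finset (σ →₀ ℕ)}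
    {m : σ →₀ ℕ} (hm : Dominant G m) (hSG : S ⊆ G) :
    (mdeg (mlcm S) : ℤ) - #S ≤ (mdeg (mlcm (insert m S)) : ℤ) - #(insert m S) := by
  by_cases hmS : m ∈ S
  · rw [insert_eq_of_mem hmS]
  · obtain ⟨x, hx⟩ := hm.exists_mlcm_apply_lt hSG hmS
    have := mdeg_strictMono (mlcm_lt_mlcm_insert hx)
    rw [card_insert_of_notMem hmS]
    omega

lemma mdeg_mlcm_sub_card_le_union [DecidableEq σ] {G S : Finset (σ →₀ ℕ)}
    (hdom : ∀ m ∈ G, Dominant G m) (hSG : S ⊆ G) {D : Finset (σ →₀ ℕ)} (hDG : D ⊆ G) :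
    (mdeg (mlcm S) : ℤ) - #S ≤ (mdeg (mlcm (S ∪ D)) : ℤ) - #(S ∪ D) := by
  induction D using Finset.induction_on with
  | empty => rw [union_empty]
  | insert m D _ ih =>
    rw [insert_subset_iff] at hDG
    rw [union_insert]
    exact (ih hDG.2).trans <|
      (hdom m hDG.1).mdeg_mlcm_sub_card_le_insert (union_subset hSG hDG.2)

end

theorem regularity_bound_of_dominant (G : Finset (X →₀ ℕ))
    (hdom : ∀ m ∈ G, Dominant G m)
    (L : Finset (X →₀ ℕ)) (hL : L ⊆ G) :
    (mdeg (mlcm G) : ℤ) - (G.card : ℤ) ≥ (mdeg (mlcm L) : ℤ) - (L.card : ℤ) := by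
  simpa only [union_eq_right.mpr hL] using mdeg_mlcm_sub_card_le_union hdom hL subset_rfl
end

section
/- Let l₁, …, l_q be monomials with pairwise disjoint supports (no variable appears in two of them), i.e., a monomial regular sequence, and let l be a monomial such that {l₁, …, l_q, l} is a minimal generating set (no element divides another). Then each l_i is dominant with respect to G = {l₁, …, l_q, l}. Consequently G has at most one nondominant element. -/
open Finset

variable {X : Type*} [DecidableEq X]

theorem dominant_insert_of_not_le {R : Finset (X →₀ ℕ)} {l m : X →₀ ℕ}
    (hdisj : ∀ m' ∈ R, m' ≠ m → ∀ x : X, m' x = 0 ∨ m x = 0) (hml : ¬ m ≤ l) :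
    Dominant (insert l R) m := by
  obtain ⟨x, hx⟩ : ∃ x, l x < m x := by simpa only [Finsupp.le_def, not_forall, not_le] using hml
  have hpos : 0 < m x := (Nat.zero_le _).trans_lt hx
  refine ⟨x, m x, hpos, le_rfl, fun m' hm' hne => ?_⟩
  rcases mem_insert.mp hm' with rfl | hm'R
  · exact hx
  · rcases hdisj m' hm'R hne x with h | h
    · rwa [h]
    · omega

theorem almost_complete_intersection_dominant (R : Finset (X →₀ ℕ)) (l : X →₀ ℕ)
    (hdisj : ∀ a ∈ R, ∀ b ∈ R, a ≠ b → ∀ x : X, a x = 0 ∨ b x = 0)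
    (hl : l ∉ R)
    (G : Finset (X →₀ ℕ)) (hG : G = insert l R)
    (hmin : ∀ a ∈ G, ∀ b ∈ G, a ≠ b → ¬ a ≤ b) :
    ∀ m ∈ R, Dominant G m := by
  intro m hm
  subst hG
  have hml : ¬ m ≤ l :=
    hmin m (mem_insert_of_mem hm) l (mem_insert_self l R) (ne_of_mem_of_not_mem hm hl)
  exact dominant_insert_of_not_le (fun m' hm' hne => hdisj m' hm' m hm hne) hml
end

section
/- Let G = {m₁, …, m_q, n₁, n₂} be a 2-semidominant set of monomials, and suppose no variable appears with the same nonzero exponent in n₁ and n₂. Then for every σ ⊆ {m₁,…,m_q}, it is not the case that lcm(σ ∪ {n₁}) = lcm(σ ∪ {n₂}) while n₁ does not divide lcm(σ). Equivalently, if lcm(σ ∪ {n₁}) = lcm(σ ∪ {n₂}), then n₁ divides lcm(σ) and n₂ divides lcm(σ). -/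
open Finset

variable {X : Type*} [DecidableEq X]

/-! Pointwise, `max (n₁ x) (L x) = max (n₂ x) (L x)` with `n₁ x ≠ n₂ x` forces both exponents to be
at most `L x`: otherwise the larger of the two would be the common maximum, and the smaller one
could not reach it. Genericity leaves only the case `n₁ x = n₂ x = 0`, which is trivial. -/

theorem le_of_max_eq_max_of_ne {α : Type*} [LinearOrder α] {a b c : α}
    (h : max a c = max b c) (hab : a ≠ b) : a ≤ c := by
  by_contra! hca
  rw [max_eq_left hca.le] at h
  rcases max_choice b c with hb | hc
  · exact hab (h.trans hb)
  · exact hca.ne' (h.trans hc)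

theorem Finsupp.le_and_le_of_sup_eq_sup {ι : Type*} {f g h : ι →₀ ℕ} (heq : f ⊔ h = g ⊔ h)
    (hgen : ∀ i, f i = g i → f i = 0) : f ≤ h ∧ g ≤ h := by
  have hpt : ∀ i, f i ≤ h i ∧ g i ≤ h i := fun i ↦ by
    by_cases hfg : f i = g i
    · simp [← hfg, hgen i hfg]
    · have hi : max (f i) (h i) = max (g i) (h i) := by simpa using DFunLike.congr_fun heq i
      exact ⟨le_of_max_eq_max_of_ne hi hfg, le_of_max_eq_max_of_ne hi.symm (Ne.symm hfg)⟩
  exact ⟨fun i ↦ (hpt i).1, fun i ↦ (hpt i).2⟩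

theorem mlcm_insert (n : X →₀ ℕ) (σ : Finset (X →₀ ℕ)) : mlcm (insert n σ) = n ⊔ mlcm σ :=
  Finset.sup_insert

theorem two_semidominant_generic_scarf_general (G : Finset (X →₀ ℕ)) (n₁ n₂ : X →₀ ℕ)
    (hexp : ∀ x : X, n₁ x = n₂ x → n₁ x = 0) :
    ∀ σ ⊆ (G.erase n₁).erase n₂,
      mlcm (insert n₁ σ) = mlcm (insert n₂ σ) →
      n₁ ≤ mlcm σ ∧ n₂ ≤ mlcm σ := by
  intro σ _ heq
  rw [mlcm_insert, mlcm_insert] at heq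
  exact Finsupp.le_and_le_of_sup_eq_sup heq hexp

theorem two_semidominant_generic_scarf (G : Finset (X →₀ ℕ)) (n₁ n₂ : X →₀ ℕ)
    (h1 : n₁ ∈ G) (h2 : n₂ ∈ G) (hne : n₁ ≠ n₂)
    (hnd1 : ¬ Dominant G n₁) (hnd2 : ¬ Dominant G n₂)
    (hdom : ∀ m ∈ G, m ≠ n₁ → m ≠ n₂ → Dominant G m)
    (hexp : ∀ x : X, n₁ x = n₂ x → n₁ x = 0) :
    ∀ σ ⊆ (G.erase n₁).erase n₂,
      mlcm (insert n₁ σ) = mlcm (insert n₂ σ) →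
      n₁ ≤ mlcm σ ∧ n₂ ≤ mlcm σ :=
  two_semidominant_generic_scarf_general G n₁ n₂ hexp
end

section
/- Let G = {m₁, …, m_q, n} be a semidominant set of monomials, and let r be the maximal cardinality of a dominant subset of G containing n. For any subset σ ⊆ G with |σ| > r: if n ∉ σ then n divides lcm(σ), and if n ∈ σ then n divides lcm(σ \ {n}). -/
/-!
If `n` does not divide `lcm τ` for some `τ ⊆ G \ {n}`, then some variable has a larger exponent
in `n` than in every element of `τ`, so `n` is dominant with respect to `τ ∪ {n}`. The elements
of `τ` stay dominant there because dominance passes to subsets. Hence `τ ∪ {n}` is a dominant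
subset containing `n`, which forces `|τ| < r`.
-/

open Finset

variable {X : Type*} [DecidableEq X]

omit [DecidableEq X] in
theorem Dominant.mono {G D : Finset (X →₀ ℕ)} {m : X →₀ ℕ} (h : Dominant G m) (hDG : D ⊆ G) :
    Dominant D m := by
  obtain ⟨x, k, hk, hkm, hlt⟩ := h
  exact ⟨x, k, hk, hkm, fun m' hm' => hlt m' (hDG hm')⟩

theorem dominant_insert_of_not_le_mlcm {τ : Finset (X →₀ ℕ)} {n : X →₀ ℕ}
    (h : ¬ n ≤ mlcm τ) : Dominant (insert n τ) n := by
  obtain ⟨x, hx⟩ : ∃ x, mlcm τ x < n x := by simpa [Finsupp.le_def] using h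
  refine ⟨x, n x, by omega, le_rfl, fun m hm hne => ?_⟩
  have hmτ : m ∈ τ := (mem_insert.mp hm).resolve_left hne
  exact (Finsupp.le_def.mp (le_sup (f := id) hmτ) x).trans_lt hx

theorem forall_dominant_insert_of_not_le_mlcm {G τ : Finset (X →₀ ℕ)} {n : X →₀ ℕ}
    (hn : n ∈ G) (hτG : τ ⊆ G) (hnτ : n ∉ τ) (hdom : ∀ m ∈ G, m ≠ n → Dominant G m)
    (h : ¬ n ≤ mlcm τ) : ∀ m ∈ insert n τ, Dominant (insert n τ) m := by
  intro m hm
  rcases mem_insert.mp hm with rfl | hmτ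
  · exact dominant_insert_of_not_le_mlcm h
  · exact (hdom m (hτG hmτ) (ne_of_mem_of_not_mem hmτ hnτ)).mono (insert_subset hn hτG)

theorem le_mlcm_of_le_card {G τ : Finset (X →₀ ℕ)} {n : X →₀ ℕ} {r : ℕ}
    (hn : n ∈ G) (hdom : ∀ m ∈ G, m ≠ n → Dominant G m)
    (hub : ∀ D ⊆ G, n ∈ D → (∀ m ∈ D, Dominant D m) → D.card ≤ r)
    (hτG : τ ⊆ G) (hnτ : n ∉ τ) (hr : r ≤ τ.card) : n ≤ mlcm τ := by
  by_contra h
  have hcard := hub _ (insert_subset hn hτG) (mem_insert_self n τ)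
    (forall_dominant_insert_of_not_le_mlcm hn hτG hnτ hdom h)
  rw [card_insert_of_notMem hnτ] at hcard
  omega

theorem semidominant_above_pd_general (G : Finset (X →₀ ℕ)) (n : X →₀ ℕ) (hn : n ∈ G)
    (hdom : ∀ m ∈ G, m ≠ n → Dominant G m)
    (r : ℕ)
    (hub : ∀ D ⊆ G, n ∈ D → (∀ m ∈ D, Dominant D m) → D.card ≤ r) :
    ∀ σ ⊆ G, r < σ.card →
      (n ∉ σ → n ≤ mlcm σ) ∧ (n ∈ σ → n ≤ mlcm (σ.erase n)) := by
  intro σ hσG hσ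
  refine ⟨fun hnσ => le_mlcm_of_le_card hn hdom hub hσG hnσ hσ.le, fun hnσ => ?_⟩
  refine le_mlcm_of_le_card hn hdom hub ((erase_subset n σ).trans hσG) (notMem_erase n σ) ?_
  rw [card_erase_of_mem hnσ]
  omega

theorem semidominant_above_pd (G : Finset (X →₀ ℕ)) (n : X →₀ ℕ) (hn : n ∈ G)
    (hnd : ¬ Dominant G n) (hdom : ∀ m ∈ G, m ≠ n → Dominant G m)
    (r : ℕ)
    (hub : ∀ D ⊆ G, n ∈ D → (∀ m ∈ D, Dominant D m) → D.card ≤ r)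
    (hmax : ∃ D ⊆ G, n ∈ D ∧ (∀ m ∈ D, Dominant D m) ∧ D.card = r) :
    ∀ σ ⊆ G, r < σ.card →
      (n ∉ σ → n ≤ mlcm σ) ∧ (n ∈ σ → n ≤ mlcm (σ.erase n)) :=
  semidominant_above_pd_general G n hn hdom r hub
end
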